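/- arXiv:2510.22012 — 2 statements merged into one kernel-verified Lean document; each statement's English description precedes it below -/
import Mathlib

section
/- The canonical nonlinear connection N^i_j = ∂G^i/∂y^j of the semispray G^i(x,y) = −(1/2)[Σ_j(∂X^i/∂x^j − ∂X^j/∂x^i)y^j + Σ_j(∂X^j/∂x^i)X^j] equals, as a matrix, N = −(1/2)(J − J^t), where J = (∂X^i/∂x^j) is the Jacobian matrix of X; in particular N is skew-symmetric. -/
/-- Partial derivative of a scalar function on ℝⁿ in the j-th coordinate direction. -/
noncomputable def pd {n : ℕ} (j : Fin n) (f : (Fin n → ℝ) → ℝ) (x : Fin n → ℝ) : ℝ :=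
  fderiv ℝ f x (Pi.single j 1)

open Matrix

section AffineFunctional

variable {𝕜 ι : Type*} [NontriviallyNormedField 𝕜] [CompleteSpace 𝕜] [Fintype ι]

lemma differentiable_dotProduct_left (a : ι → 𝕜) : Differentiable 𝕜 fun y => a ⬝ᵥ y :=
  (LinearMap.toContinuousLinearMap (dotProductBilin 𝕜 𝕜 a)).differentiable

lemma fderiv_dotProduct_left_apply_single [DecidableEq ι] (a y : ι → 𝕜) (j : ι) :
    fderiv 𝕜 (fun y => a ⬝ᵥ y) y (Pi.single j 1) = a j := by
  change fderiv 𝕜 (LinearMap.toContinuousLinearMap (dotProductBilin 𝕜 𝕜 a)) y _ = _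
  rw [ContinuousLinearMap.fderiv]
  simp

lemma fderiv_const_mul_dotProduct_add_const_apply_single [DecidableEq ι]
    (c b : 𝕜) (a y : ι → 𝕜) (j : ι) :
    fderiv 𝕜 (fun y => c * (a ⬝ᵥ y + b)) y (Pi.single j 1) = c * a j := by
  have hdiff := differentiable_dotProduct_left a y
  rw [fderiv_const_mul (hdiff.add_const b), fderiv_add_const, _root_.smul_apply,
    fderiv_dotProduct_left_apply_single, smul_eq_mul]

end AffineFunctional

lemma transpose_smul_sub_transpose {n R α : Type*} [Monoid R] [AddGroup α] [DistribMulAction R α]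
    (c : R) (A : Matrix n n α) : (c • (A - Aᵀ))ᵀ = -(c • (A - Aᵀ)) := by
  rw [transpose_smul, transpose_sub, transpose_transpose, ← smul_neg, neg_sub]

theorem nonlinear_connection_eq_skew_jacobian_general
    (n : ℕ) (X : (Fin n → ℝ) → (Fin n → ℝ))
    (J : (Fin n → ℝ) → Matrix (Fin n) (Fin n) ℝ)
    (G : Fin n → (Fin n → ℝ) → (Fin n → ℝ) → ℝ)
    (hG : ∀ i x y, G i x y =
      -(1 / 2) * ((∑ j, (J x i j - J x j i) * y j) + ∑ j, J x j i * X x j))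
    (Nc : (Fin n → ℝ) → Matrix (Fin n) (Fin n) ℝ)
    (hN : ∀ x i j, Nc x i j = fderiv ℝ (fun y => G i x y) 0 (Pi.single j 1)) :
    ∀ x, (Nc x = ((-1 : ℝ) / 2) • (J x - (J x).transpose)) ∧ (Nc x).transpose = -(Nc x) := by
  intro x
  have hNc : Nc x = ((-1 : ℝ) / 2) • (J x - (J x).transpose) := by
    ext i j
    have hGi : (fun y => G i x y) = fun y =>
        -(1 / 2) * ((fun k => J x i k - J x k i) ⬝ᵥ y + ∑ k, J x k i * X x k) :=
      funext (hG i x)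
    rw [hN, hGi, fderiv_const_mul_dotProduct_add_const_apply_single]
    simp only [Matrix.smul_apply, Matrix.sub_apply, transpose_apply, smul_eq_mul]
    ring
  exact ⟨hNc, hNc ▸ transpose_smul_sub_transpose _ _⟩

/-- The canonical nonlinear connection Nⁱⱼ = ∂Gⁱ/∂yʲ of the semispray
Gⁱ(x,y) = −(1/2)[Σⱼ (∂Xⁱ/∂xʲ − ∂Xʲ/∂xⁱ)yʲ + Σⱼ (∂Xʲ/∂xⁱ)Xʲ] equals, as a matrix,
N = −(1/2)(J − Jᵀ) where J is the Jacobian of X; in particular N is skew-symmetric. -/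
theorem nonlinear_connection_eq_skew_jacobian
    (n : ℕ) (X : (Fin n → ℝ) → (Fin n → ℝ)) (hX : ContDiff ℝ 2 X)
    (J : (Fin n → ℝ) → Matrix (Fin n) (Fin n) ℝ)
    (hJ : ∀ x i j, J x i j = pd j (fun x' => X x' i) x)
    (G : Fin n → (Fin n → ℝ) → (Fin n → ℝ) → ℝ)
    (hG : ∀ i x y, G i x y =
      -(1 / 2) * ((∑ j, (J x i j - J x j i) * y j) + ∑ j, J x j i * X x j))
    (Nc : (Fin n → ℝ) → Matrix (Fin n) (Fin n) ℝ)
    (hN : ∀ x i j, Nc x i j = fderiv ℝ (fun y => G i x y) 0 (Pi.single j 1)) :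
    ∀ x, (Nc x = ((-1 : ℝ) / 2) • (J x - (J x).transpose)) ∧ (Nc x).transpose = -(Nc x) :=
  nonlinear_connection_eq_skew_jacobian_general n X J G hG Nc hN
end

section
/- Every solution of the ODE system dx/dt = X(x) also solves the Euler–Lagrange geodesic-type equations d²x^k/dt² + 2G^k(x, dx/dt) = 0, where G^k = −(1/2)[Σ_j(∂X^k/∂x^j − ∂X^j/∂x^k)(dx^j/dt) + Σ_j(∂X^j/∂x^k)X^j(x)]. -/
/-!
Differentiating `x' = X(x)` once more gives `ẍᵏ = Σⱼ ∂ⱼXᵏ(x) Xʲ(x)` by the chain rule. With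
`y = X(x)`, the term `Σⱼ ∂ₖXʲ yʲ` coming from the antisymmetric part of the Jacobian cancels against
`Σⱼ ∂ₖXʲ Xʲ`, leaving `2Gᵏ = -Σⱼ ∂ⱼXᵏ Xʲ = -ẍᵏ`.
-/

open Finset

theorem fderiv_apply_eq_sum_pd {n : ℕ} (f : (Fin n → ℝ) → ℝ) (y v : Fin n → ℝ) :
    fderiv ℝ f y v = ∑ j, v j * pd j f y := by
  conv_lhs => rw [pi_eq_sum_univ' v]
  simp only [map_sum, map_smul, smul_eq_mul, pd]

theorem deriv_deriv_eq_fderiv_apply_of_deriv_eq_comp {E : Type*} [NormedAddCommGroup E]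
    [NormedSpace ℝ E] {X : E → E} {x : ℝ → E} {t : ℝ} (hX : DifferentiableAt ℝ X (x t))
    (hx : DifferentiableAt ℝ x t) (hsol : ∀ s, deriv x s = X (x s)) :
    deriv (deriv x) t = fderiv ℝ X (x t) (X (x t)) := by
  rw [show deriv x = X ∘ x from funext hsol, fderiv_comp_deriv t hX hx, hsol]

theorem ode_solution_solves_euler_lagrange_general
    (n : ℕ) (X : (Fin n → ℝ) → (Fin n → ℝ)) (hX : ContDiff ℝ 1 X)
    (G : Fin n → (Fin n → ℝ) → (Fin n → ℝ) → ℝ)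
    (hG : ∀ k x y, G k x y =
      -(1 / 2) * ((∑ j, (pd j (fun x' => X x' k) x - pd k (fun x' => X x' j) x) * y j)
        + ∑ j, pd k (fun x' => X x' j) x * X x j))
    (x : ℝ → (Fin n → ℝ)) (hx : ContDiff ℝ 2 x)
    (hsol : ∀ t, deriv x t = X (x t)) :
    ∀ k t, deriv (deriv x) t k + 2 * G k (x t) (deriv x t) = 0 := by
  intro k t
  have hXd : DifferentiableAt ℝ X (x t) := hX.differentiable one_ne_zero _
  have hsecond : deriv (deriv x) t k = ∑ j, X (x t) j * pd j (fun x' => X x' k) (x t) := by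
    rw [deriv_deriv_eq_fderiv_apply_of_deriv_eq_comp hXd
      (hx.differentiable two_ne_zero t) hsol, ← fderiv_apply_eq_sum_pd, fderiv_apply hXd k]
    rfl
  rw [hsecond, hG, hsol, ← sum_add_distrib]
  simp only [sub_mul, sub_add_cancel, mul_comm (X (x t) _)]
  ring

/-- Every solution of dx/dt = X(x) also solves the Euler–Lagrange
geodesic-type equations d²xᵏ/dt² + 2Gᵏ(x, dx/dt) = 0, where
Gᵏ = −(1/2)[Σⱼ (∂Xᵏ/∂xʲ − ∂Xʲ/∂xᵏ)(dxʲ/dt) + Σⱼ (∂Xʲ/∂xᵏ)Xʲ(x)]. -/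
theorem ode_solution_solves_euler_lagrange
    (n : ℕ) (X : (Fin n → ℝ) → (Fin n → ℝ)) (hX : ContDiff ℝ 1 X)
    (hX' : ∀ i, ContDiff ℝ 1 (fun x => fderiv ℝ (fun x' => X x' i) x))
    (G : Fin n → (Fin n → ℝ) → (Fin n → ℝ) → ℝ)
    (hG : ∀ k x y, G k x y =
      -(1 / 2) * ((∑ j, (pd j (fun x' => X x' k) x - pd k (fun x' => X x' j) x) * y j)
        + ∑ j, pd k (fun x' => X x' j) x * X x j))
    (x : ℝ → (Fin n → ℝ)) (hx : ContDiff ℝ 2 x)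
    (hsol : ∀ t, deriv x t = X (x t)) :
    ∀ k t, deriv (deriv x) t k + 2 * G k (x t) (deriv x t) = 0 :=
  ode_solution_solves_euler_lagrange_general n X hX G hG x hx hsol
end
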